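/- arXiv:math/0503259 — 3 statements merged into one kernel-verified Lean document; each statement's English description precedes it below -/
import Mathlib

section
/- For the polynomials F_j(z) = z_j^{Mm} (for 1 ≤ j ≤ m ≤ n) in ℂ[z_1,…,z_n] and Φ(z) = (z_1 + ⋯ + z_m)^{Mm}, the power Φ^{m-1} does not belong to the ideal generated by F_1, …, F_m. -/
/-!
The ideal `(z_1^k, …, z_m^k)` is a monomial ideal, so a polynomial lies in it only if every
monomial of its support is divisible by some `z_j^k`. By the multinomial theorem, the monomial
`∏ z_i^(d_i)` occurs in `(z_1 + ⋯ + z_m)^(∑ d_i)` with the nonzero coefficient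
`multinomial d`; when every `d_i < k` it is divisible by no `z_j^k`. For `Φ^(m-1)` take
`k = M m` and `d_i = M (m - 1)`.
-/

namespace MvPolynomial

variable {R σ ι : Type*} [CommSemiring R]

theorem mem_ideal_span_range_X_pow_iff {v : ι → σ} {k : ℕ} {p : MvPolynomial σ R} :
    p ∈ Ideal.span (Set.range fun j => (X (v j) : MvPolynomial σ R) ^ k) ↔
      ∀ d ∈ p.support, ∃ j, k ≤ d (v j) := by
  have hgen : (Set.range fun j => (X (v j) : MvPolynomial σ R) ^ k) =
      (fun s => monomial s (1 : R)) '' Set.range fun j => Finsupp.single (v j) k := by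
    simp only [← Set.range_comp, Function.comp_def, X_pow_eq_monomial]
  simp [hgen, mem_ideal_span_monomial_image, Finsupp.single_le_iff]

variable [Fintype ι] {e : ι → σ}

theorem coeff_mapDomain_sum_X_pow (he : e.Injective) (d : ι →₀ ℕ) (n : ℕ) :
    coeff (d.mapDomain e) ((∑ i, X (e i) : MvPolynomial σ R) ^ n) =
      if d.sum (fun _ m ↦ m) = n then (d.multinomial : R) else 0 := by
  have hrename : (∑ i, X (e i) : MvPolynomial σ R) ^ n = rename e ((∑ i, X i) ^ n) := by simp
  rw [hrename, coeff_rename_mapDomain e he, coeff_sum_X_pow_of_fintype, Nat.cast_ite, Nat.cast_zero]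

theorem sum_X_pow_notMem_span_X_pow [CharZero R] (he : e.Injective) {k : ℕ} {d : ι → ℕ}
    (hd : ∀ i, d i < k) :
    (∑ i, X (e i) : MvPolynomial σ R) ^ (∑ i, d i) ∉
      Ideal.span (Set.range fun j => (X (e j) : MvPolynomial σ R) ^ k) := by
  set d' : ι →₀ ℕ := Finsupp.equivFunOnFinite.symm d
  have hsum : d'.sum (fun _ m ↦ m) = ∑ i, d i := by
    simp [d', Finsupp.sum_fintype]
  have hsupp : d'.mapDomain e ∈ ((∑ i, X (e i) : MvPolynomial σ R) ^ (∑ i, d i)).support := by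
    rw [mem_support_iff, coeff_mapDomain_sum_X_pow he, if_pos hsum]
    exact Nat.cast_ne_zero.mpr (Nat.multinomial_pos _ _).ne'
  rw [mem_ideal_span_range_X_pow_iff]
  intro h
  obtain ⟨j, hj⟩ := h _ hsupp
  rw [Finsupp.mapDomain_apply he] at hj
  exact (hd j).not_ge hj

end MvPolynomial

open MvPolynomial

/-- For `F_j = z_j^(M m)` (`1 ≤ j ≤ m ≤ n`) and `Φ = (z_1 + ⋯ + z_m)^(M m)`,
the power `Φ^(m-1)` does not belong to the ideal `(F_1, …, F_m)`. -/
theorem phi_pow_pred_not_mem_ideal (n m M : ℕ) (hm : 0 < m) (hmn : m ≤ n) (hM : 0 < M) :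
    ((∑ i : Fin m, (X (Fin.castLE hmn i) : MvPolynomial (Fin n) ℂ)) ^ (M * m)) ^ (m - 1) ∉
      Ideal.span (Set.range fun j : Fin m =>
        (X (Fin.castLE hmn j) : MvPolynomial (Fin n) ℂ) ^ (M * m)) := by
  have hexp : M * m * (m - 1) = ∑ _i : Fin m, M * (m - 1) := by
    simp only [Finset.sum_const, Finset.card_univ, Fintype.card_fin, smul_eq_mul]
    ring
  rw [← pow_mul, hexp]
  refine sum_X_pow_notMem_span_X_pow (Fin.castLE_injective hmn) fun _ => ?_
  exact Nat.mul_lt_mul_of_pos_left (Nat.sub_lt hm one_pos) hM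
end

section
/- Let F_j(z) = z_j^M for 1 ≤ j ≤ m−1 and F_m(z) = (1 + z_1 + ⋯ + z_{m−1})^M in ℂ[z_1,…,z_n] with 2 ≤ m ≤ n and M ≥ 1. Then there exist polynomials Q_1,…,Q_m with Σ_j F_j Q_j = 1 and deg(F_j Q_j) ≤ M m − m + 1 for each j. -/
open MvPolynomial

open Finset

lemma tdeg_natCast {σ : Type*} (n : ℕ) : ((n : MvPolynomial σ ℂ)).totalDegree = 0 := by
  rw [← map_natCast (C : ℂ →+* MvPolynomial σ ℂ) n]
  exact totalDegree_C _

lemma key_lemma {σ ι : Type*} [DecidableEq ι] (M : ℕ) (hM : 1 ≤ M)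
    (s : Finset ι) :
    ∀ (p : ι → MvPolynomial σ ℂ), (∀ i ∈ s, (p i).totalDegree ≤ 1) →
    ∀ e : ℕ, s.card * (M - 1) + 1 ≤ e →
    ∃ Q : ι → MvPolynomial σ ℂ,
      (∑ i ∈ s, p i) ^ e = ∑ i ∈ s, p i ^ M * Q i ∧
      ∀ i ∈ s, (p i ^ M * Q i).totalDegree ≤ e := by
  induction s using Finset.cons_induction with
  | empty =>
    intro p hp e he
    refine ⟨0, ?_, by simp⟩
    simp only [sum_empty]
    rw [zero_pow (by omega)]
  | cons a s ha ih =>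
    intro p hp e he
    have hpa : (p a).totalDegree ≤ 1 := hp a (mem_cons_self a s)
    have hps : ∀ i ∈ s, (p i).totalDegree ≤ 1 := fun i hi => hp i (mem_cons_of_mem hi)
    have hTdeg : (∑ i ∈ s, p i).totalDegree ≤ 1 := totalDegree_finsetSum_le hps
    rw [card_cons, add_mul, one_mul] at he
    have hMe : M ≤ e := by omega
    have H : ∀ k : ℕ, ∃ Q : ι → MvPolynomial σ ℂ, k < M →
        ((∑ i ∈ s, p i) ^ (e - k) = ∑ i ∈ s, p i ^ M * Q i ∧
         ∀ i ∈ s, (p i ^ M * Q i).totalDegree ≤ e - k) := by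
      intro k
      by_cases hk : k < M
      · obtain ⟨Q, h1, h2⟩ := ih p hps (e - k) (by omega)
        exact ⟨Q, fun _ => ⟨h1, h2⟩⟩
      · exact ⟨0, fun h => absurd h hk⟩
    choose Qf hQf using H
    set T := ∑ i ∈ s, p i with hT
    set Qa : MvPolynomial σ ℂ :=
      ∑ k ∈ Ico M (e + 1), p a ^ (k - M) * T ^ (e - k) * (e.choose k : MvPolynomial σ ℂ)
      with hQa
    refine ⟨fun i => if i = a then Qa else ∑ k ∈ range M,
        (e.choose k : MvPolynomial σ ℂ) * p a ^ k * Qf k i, ?_, ?_⟩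
    · rw [sum_cons, add_pow, sum_cons]
      beta_reduce
      rw [if_pos rfl]
      have hsplit : ∑ k ∈ range (e + 1), p a ^ k * T ^ (e - k) * (e.choose k : MvPolynomial σ ℂ)
          = (∑ k ∈ Ico M (e + 1), p a ^ k * T ^ (e - k) * (e.choose k : MvPolynomial σ ℂ))
          + ∑ k ∈ range M, p a ^ k * T ^ (e - k) * (e.choose k : MvPolynomial σ ℂ) := by
        simp only [range_eq_Ico]
        rw [← Finset.sum_Ico_consecutive _ (Nat.zero_le M) (show M ≤ e + 1 by omega)]
        ring
      rw [hsplit]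
      congr 1
      · rw [hQa, Finset.mul_sum]
        refine Finset.sum_congr rfl fun k hk => ?_
        rw [mem_Ico] at hk
        rw [← mul_assoc, ← mul_assoc, ← pow_add, Nat.add_sub_cancel' hk.1]
      · have : ∀ i ∈ s, p i ^ M * (if i = a then Qa else ∑ k ∈ range M,
            (e.choose k : MvPolynomial σ ℂ) * p a ^ k * Qf k i)
            = ∑ k ∈ range M, (e.choose k : MvPolynomial σ ℂ) * p a ^ k * (p i ^ M * Qf k i) := by
          intro i hi
          rw [if_neg (by rintro rfl; exact ha hi), Finset.mul_sum]
          exact Finset.sum_congr rfl fun k _ => by ring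
        rw [Finset.sum_congr rfl this, Finset.sum_comm]
        refine Finset.sum_congr rfl fun k hk => ?_
        rw [mem_range] at hk
        rw [← Finset.mul_sum, ← (hQf k hk).1]
        ring
    · intro i hi
      rw [mem_cons] at hi
      beta_reduce
      rcases hi with rfl | hi
      · rw [if_pos rfl, hQa, Finset.mul_sum]
        refine totalDegree_finsetSum_le fun k hk => ?_
        rw [mem_Ico] at hk
        have h1 : (p i ^ M).totalDegree ≤ M := (totalDegree_pow _ _).trans (by nlinarith)
        have h2 : (p i ^ (k - M)).totalDegree ≤ k - M := (totalDegree_pow _ _).trans (by nlinarith)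
        have h3 : (T ^ (e - k)).totalDegree ≤ e - k := (totalDegree_pow _ _).trans (by nlinarith)
        calc (p i ^ M * (p i ^ (k - M) * T ^ (e - k) * (e.choose k : MvPolynomial σ ℂ))).totalDegree
            ≤ (p i ^ M).totalDegree + ((p i ^ (k - M)).totalDegree + (T ^ (e - k)).totalDegree
              + ((e.choose k : MvPolynomial σ ℂ)).totalDegree) :=
              (totalDegree_mul _ _).trans (add_le_add le_rfl
                ((totalDegree_mul _ _).trans (add_le_add (totalDegree_mul _ _) le_rfl)))
          _ ≤ M + ((k - M) + (e - k) + 0) := by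
              exact add_le_add h1 (add_le_add (add_le_add h2 h3) (le_of_eq (tdeg_natCast _)))
          _ ≤ e := by omega
      · rw [if_neg (by rintro rfl; exact ha hi), Finset.mul_sum]
        refine totalDegree_finsetSum_le fun k hk => ?_
        rw [mem_range] at hk
        have h2 := (hQf k hk).2 i hi
        have h4 : (p a ^ k).totalDegree ≤ k := (totalDegree_pow _ _).trans (by nlinarith)
        calc (p i ^ M * ((e.choose k : MvPolynomial σ ℂ) * p a ^ k * Qf k i)).totalDegree
            = ((e.choose k : MvPolynomial σ ℂ) * (p a ^ k * (p i ^ M * Qf k i))).totalDegree := by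
              ring_nf
          _ ≤ ((e.choose k : MvPolynomial σ ℂ)).totalDegree + ((p a ^ k).totalDegree
              + (p i ^ M * Qf k i).totalDegree) :=
              (totalDegree_mul _ _).trans (add_le_add le_rfl (totalDegree_mul _ _))
          _ ≤ 0 + (k + (e - k)) := add_le_add (le_of_eq (tdeg_natCast _)) (add_le_add h4 h2)
          _ ≤ e := by omega

/-- For `F_j = z_j^M` (`1 ≤ j ≤ m-1`) and `F_m = (1 + z_1 + ⋯ + z_{m-1})^M` with
`2 ≤ m ≤ n`, `M ≥ 1`, there are polynomials `Q_j` with `Σ_j F_j Q_j = 1` and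
`deg (F_j Q_j) ≤ M m − m + 1`. -/
theorem bezout_with_degree_bound (n m M : ℕ) (hm2 : 2 ≤ m) (hmn : m ≤ n) (hM : 1 ≤ M)
    (F : Fin m → MvPolynomial (Fin n) ℂ)
    (hF : ∀ j : Fin m, (hj : (j : ℕ) < m - 1) →
      F j = (X (⟨(j : ℕ), by omega⟩ : Fin n) : MvPolynomial (Fin n) ℂ) ^ M)
    (hFm : F ⟨m - 1, by omega⟩ =
      (1 + ∑ i : Fin (m - 1), X (Fin.castLE (show m - 1 ≤ n by omega) i) : MvPolynomial (Fin n) ℂ) ^ M) :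
    ∃ Q : Fin m → MvPolynomial (Fin n) ℂ,
      (∑ j : Fin m, F j * Q j = 1) ∧
      ∀ j : Fin m, (F j * Q j).totalDegree ≤ M * m - m + 1 := by
  obtain ⟨m', rfl⟩ : ∃ m', m = m' + 1 := ⟨m - 1, by omega⟩
  have hn : m' ≤ n := by omega
  set S : MvPolynomial (Fin n) ℂ := 1 + ∑ i : Fin m', X (Fin.castLE hn i) with hS
  have hFm' : F (Fin.last m') = S ^ M := hFm
  set p : Fin (m' + 1) → MvPolynomial (Fin n) ℂ :=
    fun j => if (j : ℕ) < m' then -X (Fin.castLE hmn j) else S with hp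
  have hdeg : ∀ j ∈ Finset.univ, (p j).totalDegree ≤ 1 := by
    intro j _
    simp only [hp]
    by_cases h : (j : ℕ) < m'
    · rw [if_pos h]
      have : (-X (Fin.castLE hmn j) : MvPolynomial (Fin n) ℂ)
          = C (-1 : ℂ) * X (Fin.castLE hmn j) := by ring_nf; rw [map_neg, map_one]; ring
      rw [this]
      exact (totalDegree_mul _ _).trans (by simp [totalDegree_X])
    · rw [if_neg h, hS]
      refine (totalDegree_add _ _).trans (max_le (by simp) ?_)
      exact totalDegree_finsetSum_le fun i _ => le_of_eq (totalDegree_X _)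
  have hsum : ∑ j : Fin (m' + 1), p j = 1 := by
    rw [Fin.sum_univ_castSucc]
    have h1 : ∀ i : Fin m', p (Fin.castSucc i) = -X (Fin.castLE hn i) := by
      intro i
      simp only [hp]
      rw [if_pos (by simp [i.isLt])]
      congr 1
    have h2 : p (Fin.last m') = S := by simp only [hp]; simp
    rw [Finset.sum_congr rfl fun i _ => h1 i, h2, hS]
    rw [Finset.sum_neg_distrib]
    ring
  have hcard : (Finset.univ : Finset (Fin (m' + 1))).card * (M - 1) + 1
      ≤ M * (m' + 1) - (m' + 1) + 1 := by
    rw [Finset.card_univ, Fintype.card_fin]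
    have h1 : (m' + 1) * (M - 1) = (m' + 1) * M - (m' + 1) := by
      rw [Nat.mul_sub, Nat.mul_one]
    have h2 : (m' + 1) * M = M * (m' + 1) := mul_comm _ _
    have h3 : (m' + 1) ≤ (m' + 1) * M := Nat.le_mul_of_pos_right _ (by omega)
    omega
  obtain ⟨Q', hQ1, hQ2⟩ := key_lemma M hM Finset.univ p hdeg (M * (m' + 1) - (m' + 1) + 1) hcard
  rw [hsum, one_pow] at hQ1
  have hFQ : ∀ j : Fin (m' + 1),
      F j * ((if (j : ℕ) < m' then (-1 : MvPolynomial (Fin n) ℂ) ^ M else 1) * Q' j)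
      = p j ^ M * Q' j := by
    intro j
    by_cases h : (j : ℕ) < m'
    · have hFj : F j = X (Fin.castLE hmn j) ^ M := hF j h
      rw [if_pos h, hFj]; simp only [hp]
      simp only [if_pos h]
      rw [neg_pow]
      ring
    · have hj : j = Fin.last m' := by
        apply Fin.ext
        have := j.isLt
        simp only [Fin.val_last]
        omega
      rw [if_neg h, hj, hFm']; simp only [hp]
      simp only [Fin.val_last, lt_irrefl, if_false, if_neg (lt_irrefl m')]
      ring
  refine ⟨fun j => (if (j : ℕ) < m' then (-1 : MvPolynomial (Fin n) ℂ) ^ M else 1) * Q' j, ?_, ?_⟩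
  · rw [Finset.sum_congr rfl fun j _ => hFQ j, ← hQ1]
  · intro j
    rw [hFQ j]
    exact hQ2 j (Finset.mem_univ j)
end

section
/- Let F_1,…,F_m ∈ ℂ[z_1,…,z_n] have no common zero in ℂ^n. Then there exist a constant c > 0 and an integer M such that Σ_{j=1}^m |F_j(z)|^2 / (1+|z|^2)^{d_j} ≥ c (1+|z|^2)^{−M} for all z ∈ ℂ^n, where d_j = deg F_j. -/
/-!
By the weak Nullstellensatz there are polynomials `G_j` with `∑ G_j F_j = 1`. Evaluating at `z`
and applying Cauchy–Schwarz with weights `T^{d_j}`, `T = 1 + |z|²`, gives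
`1 ≤ (∑ |G_j(z)|² T^{d_j}) (∑ |F_j(z)|² / T^{d_j})`, and the first factor is bounded by a constant
times a power of `T` because each `|z_i| ≤ T`.
-/

open MvPolynomial

theorem MvPolynomial.exists_sum_mul_eq_one_of_forall_exists_eval_ne_zero {k σ ι : Type*}
    [Field k] [IsAlgClosed k] [Finite σ] [Fintype ι] (F : ι → MvPolynomial σ k)
    (h : ∀ z : σ → k, ∃ j, eval z (F j) ≠ 0) :
    ∃ G : ι → MvPolynomial σ k, ∑ j, G j * F j = 1 := by
  have hzero : zeroLocus k (Ideal.span (Set.range F)) = ∅ := by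
    rw [zeroLocus_span, Set.eq_empty_iff_forall_notMem]
    intro z hz
    obtain ⟨j, hj⟩ := h z
    exact hj (hz (F j) ⟨j, rfl⟩)
  have htop : Ideal.span (Set.range F) = ⊤ := by
    rw [← Ideal.radical_eq_top, ← vanishingIdeal_zeroLocus_eq_radical (K := k), hzero,
      vanishingIdeal_empty]
  have hone : (1 : MvPolynomial σ k) ∈ Ideal.span (Set.range F) := htop ▸ Submodule.mem_top
  simpa only [smul_eq_mul] using (Submodule.mem_span_range_iff_exists_fun _).mp hone

theorem MvPolynomial.norm_eval_le_sum_norm_coeff_mul_pow_totalDegree {𝕜 σ : Type*}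
    [NormedField 𝕜] [Fintype σ] (P : MvPolynomial σ 𝕜) {z : σ → 𝕜} {T : ℝ} (hT : 1 ≤ T)
    (hz : ∀ i, ‖z i‖ ≤ T) :
    ‖eval z P‖ ≤ (∑ d ∈ P.support, ‖coeff d P‖) * T ^ P.totalDegree := by
  rw [eval_eq', Finset.sum_mul]
  refine (norm_sum_le _ _).trans (Finset.sum_le_sum fun d hd => ?_)
  rw [norm_mul, norm_prod]
  gcongr
  calc ∏ i, ‖z i ^ d i‖ ≤ ∏ i, T ^ d i := by
        gcongr with i; rw [norm_pow]; exact pow_le_pow_left₀ (norm_nonneg _) (hz i) _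
    _ = T ^ ∑ i, d i := Finset.prod_pow_eq_pow_sum _ _ _
    _ ≤ T ^ P.totalDegree := by
        gcongr
        simpa [Finsupp.sum_fintype] using le_totalDegree hd

theorem MvPolynomial.norm_eval_sq_mul_pow_le {𝕜 σ : Type*} [NormedField 𝕜] [Fintype σ]
    (P : MvPolynomial σ 𝕜) {z : σ → 𝕜} {T : ℝ} (hT : 1 ≤ T) (hz : ∀ i, ‖z i‖ ≤ T) {e N : ℕ}
    (hN : 2 * P.totalDegree + e ≤ N) :
    ‖eval z P‖ ^ 2 * T ^ e ≤ (∑ d ∈ P.support, ‖coeff d P‖) ^ 2 * T ^ N :=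
  calc ‖eval z P‖ ^ 2 * T ^ e
      ≤ ((∑ d ∈ P.support, ‖coeff d P‖) * T ^ P.totalDegree) ^ 2 * T ^ e := by
        gcongr
        exact P.norm_eval_le_sum_norm_coeff_mul_pow_totalDegree hT hz
    _ = (∑ d ∈ P.support, ‖coeff d P‖) ^ 2 * T ^ (2 * P.totalDegree + e) := by ring
    _ ≤ (∑ d ∈ P.support, ‖coeff d P‖) ^ 2 * T ^ N := by gcongr

theorem MvPolynomial.one_le_sum_norm_eval_mul_norm_eval {𝕜 σ ι : Type*} [NormedField 𝕜]
    [Fintype ι] {F G : ι → MvPolynomial σ 𝕜} (h : ∑ j, G j * F j = 1) (z : σ → 𝕜) :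
    1 ≤ ∑ j, ‖eval z (G j)‖ * ‖eval z (F j)‖ :=
  calc (1 : ℝ) = ‖∑ j, eval z (G j) * eval z (F j)‖ := by simp [← map_mul, ← map_sum, h]
    _ ≤ ∑ j, ‖eval z (G j)‖ * ‖eval z (F j)‖ := by
        simpa only [norm_mul] using norm_sum_le Finset.univ fun j => eval z (G j) * eval z (F j)

theorem norm_le_one_add_sum_norm_sq {E ι : Type*} [SeminormedAddGroup E] [Fintype ι]
    (z : ι → E) (i : ι) : ‖z i‖ ≤ 1 + ∑ k, ‖z k‖ ^ 2 := by
  have hi : ‖z i‖ ^ 2 ≤ ∑ k, ‖z k‖ ^ 2 :=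
    Finset.single_le_sum (fun k _ => sq_nonneg ‖z k‖) (Finset.mem_univ i)
  nlinarith [sq_nonneg (‖z i‖ - 1)]

theorem one_le_sum_sq_mul_mul_sum_sq_div {R ι : Type*} [Field R] [LinearOrder R]
    [IsStrictOrderedRing R] (s : Finset ι) {a b w : ι → R} (hw : ∀ i ∈ s, 0 < w i)
    (h : 1 ≤ ∑ i ∈ s, a i * b i) :
    1 ≤ (∑ i ∈ s, a i ^ 2 * w i) * ∑ i ∈ s, b i ^ 2 / w i := by
  have hcs := Finset.sum_sq_le_sum_mul_sum_of_sq_le_mul s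
    (fun i hi => mul_nonneg (sq_nonneg (a i)) (hw i hi).le)
    (fun i hi => div_nonneg (sq_nonneg (b i)) (hw i hi).le)
    (r := fun i => a i * b i)
    (fun i hi => by rw [mul_pow, mul_assoc, mul_div_cancel₀ _ (hw i hi).ne'])
  nlinarith

/-- Global Łojasiewicz inequality: if `F_1,…,F_m` have no common zero in `ℂ^n`, then
there are `c > 0` and an integer `M` with
`Σ_j |F_j(z)|²/(1+|z|²)^{d_j} ≥ c (1+|z|²)^{−M}` for all `z`, where `d_j = deg F_j`. -/
theorem global_lojasiewicz (n m : ℕ) (F : Fin m → MvPolynomial (Fin n) ℂ)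
    (hnozero : ∀ z : Fin n → ℂ, ∃ j, eval z (F j) ≠ 0) :
    ∃ c : ℝ, 0 < c ∧ ∃ M : ℕ, ∀ z : Fin n → ℂ,
      ∑ j, ‖eval z (F j)‖ ^ 2 / (1 + ∑ k, ‖z k‖ ^ 2) ^ ((F j).totalDegree) ≥
        c * (1 + ∑ k, ‖z k‖ ^ 2) ^ (-(M : ℝ)) := by
  obtain ⟨G, hG⟩ := exists_sum_mul_eq_one_of_forall_exists_eval_ne_zero F hnozero
  set C : Fin m → ℝ := fun j => ∑ d ∈ (G j).support, ‖coeff d (G j)‖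
  set A : ℝ := 1 + ∑ j, C j ^ 2
  set M : ℕ := Finset.univ.sup fun j => 2 * (G j).totalDegree + (F j).totalDegree
  refine ⟨A⁻¹, by positivity, M, fun z => ?_⟩
  set T : ℝ := 1 + ∑ k, ‖z k‖ ^ 2
  have hT : 1 ≤ T := le_add_of_nonneg_right (by positivity)
  have hCS := one_le_sum_sq_mul_mul_sum_sq_div Finset.univ
    (fun j _ => pow_pos (zero_lt_one.trans_le hT) (F j).totalDegree)
    (one_le_sum_norm_eval_mul_norm_eval hG z)
  have hG_le : ∑ j, ‖eval z (G j)‖ ^ 2 * T ^ (F j).totalDegree ≤ A * T ^ M := by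
    grw [Finset.sum_le_sum fun j _ => (G j).norm_eval_sq_mul_pow_le hT
      (norm_le_one_add_sum_norm_sq z) (Finset.le_sup (f := fun j =>
        2 * (G j).totalDegree + (F j).totalDegree) (Finset.mem_univ j)), ← Finset.sum_mul]
    gcongr
    linarith
  rw [ge_iff_le, Real.rpow_neg (by positivity), Real.rpow_natCast, ← mul_inv,
    inv_le_iff_one_le_mul₀' (by positivity)]
  exact hCS.trans (by gcongr)
end
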